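/- For all i, t ≥ 0, the word (ba)^i · baba · b(ab)^t(ba)^t b equals (as a word) (ba)^{i+t+2} · bb · (ab)^t, rewrites under ⇒* to (ba)^{i+2} bb, and bb(ab)^{i+2} is its reversal reachable by →*. -/

import Mathlib

/-- The four-letter alphabet `{a, b, ā, b̄}`; `A` stands for `ā` and `B` for `b̄`. -/
inductive L : Type
  | a | b | A | B
deriving DecidableEq

/-- The antiparallel letter: `a ↔ ā`, `b ↔ b̄`. -/
def bar : L → L
  | .a => .A
  | .A => .a
  | .b => .B
  | .B => .b

/-- Letterwise application of the involution `a ↔ ā`, `b ↔ b̄` to a word. -/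
def barw (w : List L) : List L := w.map bar

/-- The eight rewrite rules of the Sub Rosa system:
`ab→ba`, `bā→āb`, `āb̄→b̄ā`, `b̄a→ab̄`, `aā→ε`, `āa→ε`, `bb̄→ε`, `b̄b→ε`. -/
def Rule : List L → List L → Prop := fun x y =>
  (x = [.a, .b] ∧ y = [.b, .a]) ∨ (x = [.b, .A] ∧ y = [.A, .b]) ∨
  (x = [.A, .B] ∧ y = [.B, .A]) ∨ (x = [.B, .a] ∧ y = [.a, .B]) ∨
  (x = [.a, .A] ∧ y = []) ∨ (x = [.A, .a] ∧ y = []) ∨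
  (x = [.b, .B] ∧ y = []) ∨ (x = [.B, .b] ∧ y = [])

/-- One rewrite step: replace a factor matching the left side of a rule by its right side. -/
def Step (u v : List L) : Prop :=
  ∃ p s x y, Rule x y ∧ u = p ++ x ++ s ∧ v = p ++ y ++ s

/-- `u →* v`: the reflexive transitive closure of the rewrite step. -/
def Steps : List L → List L → Prop := Relation.ReflTransGen Step

/-- `rep w n` is the `n`-fold concatenation `w^n`. -/
def rep (w : List L) (n : ℕ) : List L := (List.replicate n w).flatten

/-- A matching on a word pairs each occurrence of a letter with an occurrence of its
antiparallel letter, bijectively (an involution without fixed points). -/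
structure Matching (w : List L) where
  m : Fin w.length → Fin w.length
  invol : ∀ i, m (m i) = i
  nofix : ∀ i, m i ≠ i
  compat : ∀ i, w.get (m i) = bar (w.get i)

/-- The 4-tuples of letters that are cyclic rotations of `(a, b, ā, b̄)`. -/
def Rot4 : L → L → L → L → Prop := fun x y z t =>
  (x = .a ∧ y = .b ∧ z = .A ∧ t = .B) ∨ (x = .b ∧ y = .A ∧ z = .B ∧ t = .a) ∨
  (x = .A ∧ y = .B ∧ z = .a ∧ t = .b) ∨ (x = .B ∧ y = .a ∧ z = .b ∧ t = .A)

/-- The crossing condition: whenever two matched pairs interleave (cross) in the cyclic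
word, the four letters read in positional order form a cyclic rotation of `a, b, ā, b̄`. -/
def CrossOK {w : List L} (M : Matching w) : Prop :=
  ∀ i j i' j' : Fin w.length, i < j → j < i' → i' < j' →
    M.m i = i' → M.m j = j' →
    Rot4 (w.get i) (w.get j) (w.get i') (w.get j')

/-- A word admits a matching satisfying the crossing condition. -/
def GoodWord (w : List L) : Prop := ∃ M : Matching w, CrossOK M

/-- `u ⇒ v`: either a rewrite step, or the conjugation-with-flip `xy ⤳ y x̄`
(move a prefix to the end with all letters replaced by their antiparallels). -/
def FStep (u v : List L) : Prop :=
  Step u v ∨ ∃ x y, u = x ++ y ∧ v = y ++ barw x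

/-- `u ⇒* v`: the reflexive transitive closure of `⇒`. -/
def FSteps : List L → List L → Prop := Relation.ReflTransGen FStep

lemma rep_succ (w : List L) (n : ℕ) : rep w (n+1) = w ++ rep w n := by
  simp [rep, List.replicate_succ]

lemma rep_add (w : List L) (m n : ℕ) : rep w (m+n) = rep w m ++ rep w n := by
  unfold rep
  rw [List.replicate_add, List.flatten_append]

lemma b_ab (t : ℕ) : [L.b] ++ rep [L.a, L.b] t = rep [L.b, L.a] t ++ [L.b] := by
  induction t with
  | zero => simp [rep]
  | succ n ih =>
    rw [rep_succ, rep_succ, List.append_assoc, ← ih]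
    rfl

lemma step_ctx {u v : List L} (l r : List L) (h : Step u v) :
    Step (l ++ u ++ r) (l ++ v ++ r) := by
  obtain ⟨p, s, x, y, hr, hu, hv⟩ := h
  exact ⟨l ++ p, s ++ r, x, y, hr, by simp [hu], by simp [hv]⟩

lemma steps_ctx {u v : List L} (l r : List L) (h : Steps u v) :
    Steps (l ++ u ++ r) (l ++ v ++ r) :=
  Relation.ReflTransGen.lift (fun x => l ++ x ++ r) (fun _ _ hs => step_ctx l r hs) _ _ h

lemma part3 (n : ℕ) :
    Steps (rep [L.b, L.a] n ++ [L.b, L.b]) ([L.b, L.b] ++ rep [L.a, L.b] n) := by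
  induction n with
  | zero =>
    simp only [rep, List.replicate_zero, List.flatten_nil, List.nil_append]
    exact Relation.ReflTransGen.refl
  | succ n ih =>
    rw [rep_succ]
    have h1 : Steps ([L.b, L.a] ++ (rep [L.b, L.a] n ++ [L.b, L.b]) ++ [])
        ([L.b, L.a] ++ ([L.b, L.b] ++ rep [L.a, L.b] n) ++ []) := steps_ctx _ _ ih
    simp only [List.append_nil] at h1
    refine Relation.ReflTransGen.trans (by simpa [List.append_assoc, Steps] using h1) ?_
    have hstep : Step ([L.b] ++ [L.a, L.b] ++ ([L.b] ++ rep [L.a, L.b] n))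
        ([L.b] ++ [L.b, L.a] ++ ([L.b] ++ rep [L.a, L.b] n)) :=
      ⟨[L.b], [L.b] ++ rep [L.a, L.b] n, [L.a, L.b], [L.b, L.a], Or.inl ⟨rfl, rfl⟩, rfl, rfl⟩
    have := Relation.ReflTransGen.single hstep
    rw [rep_succ]
    simpa using this

lemma part2 (m : ℕ) : ∀ n : ℕ,
    FSteps (rep [L.b, L.a] (m + n) ++ [L.b, L.b] ++ rep [L.a, L.b] n)
      (rep [L.b, L.a] m ++ [L.b, L.b]) := by
  intro n
  induction n with
  | zero =>
    simp only [rep, List.replicate_zero, List.flatten_nil, List.append_nil, Nat.add_zero]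
    exact Relation.ReflTransGen.refl
  | succ n ih =>
    set P := rep [L.b, L.a] (m + n) ++ [L.b, L.b] ++ rep [L.a, L.b] n with hP
    have e1 : rep [L.b, L.a] (m + (n+1)) ++ [L.b, L.b] ++ rep [L.a, L.b] (n+1)
        = [L.b, L.a] ++ (rep [L.b, L.a] (m + n) ++ [L.b, L.b] ++ rep [L.a, L.b] (n+1)) := by
      have : m + (n+1) = 1 + (m+n) := by omega
      rw [this, rep_add]
      simp [rep, List.append_assoc]
    have f1 : FStep (rep [L.b, L.a] (m + (n+1)) ++ [L.b, L.b] ++ rep [L.a, L.b] (n+1))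
        (rep [L.b, L.a] (m + n) ++ [L.b, L.b] ++ rep [L.a, L.b] (n+1) ++ barw [L.b, L.a]) := by
      right
      exact ⟨[L.b, L.a], _, e1, rfl⟩
    have e2 : rep [L.b, L.a] (m + n) ++ [L.b, L.b] ++ rep [L.a, L.b] (n+1) ++ barw [L.b, L.a]
        = (P ++ [L.a]) ++ [L.b, L.B] ++ [L.A] := by
      rw [hP, rep_add [L.a, L.b] n 1]
      simp [rep, barw, bar, List.append_assoc]
    have s2 : Step ((P ++ [L.a]) ++ [L.b, L.B] ++ [L.A]) ((P ++ [L.a]) ++ [] ++ [L.A]) :=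
      ⟨P ++ [L.a], [L.A], [L.b, L.B], [], by simp [Rule], rfl, rfl⟩
    have s3 : Step (P ++ [L.a, L.A] ++ []) (P ++ [] ++ []) :=
      ⟨P, [], [L.a, L.A], [], by simp [Rule], rfl, rfl⟩
    refine Relation.ReflTransGen.head f1 ?_
    rw [e2]
    refine Relation.ReflTransGen.head (Or.inl s2) ?_
    have e3 : (P ++ [L.a]) ++ [] ++ [L.A] = P ++ [L.a, L.A] ++ [] := by simp
    rw [e3]
    refine Relation.ReflTransGen.head (Or.inl s3) ?_
    simpa [FSteps] using ih

lemma rev_rep (n : ℕ) : (rep [L.b, L.a] n).reverse = rep [L.a, L.b] n := by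
  induction n with
  | zero => simp [rep]
  | succ n ih =>
    rw [rep_succ]
    have : rep [L.a, L.b] (n+1) = rep [L.a, L.b] n ++ [L.a, L.b] := by
      have : n + 1 = n + 1 := rfl
      rw [rep_add]; simp [rep]
    rw [this]
    simp [ih]

lemma part1 (i t : ℕ) :
    rep [L.b, L.a] i ++ [L.b, L.a, L.b, L.a] ++ [L.b] ++ rep [L.a, L.b] t
        ++ rep [L.b, L.a] t ++ [L.b] =
      rep [L.b, L.a] (i + t + 2) ++ [L.b, L.b] ++ rep [L.a, L.b] t := by
  have h2 : rep [L.b, L.a] (i + t + 2) = rep [L.b, L.a] i ++ [L.b, L.a, L.b, L.a] ++ rep [L.b, L.a] t := by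
    have : i + t + 2 = i + 2 + t := by omega
    rw [this, rep_add, rep_add]
    simp [rep]
  rw [h2]
  have hb := b_ab t
  calc rep [L.b, L.a] i ++ [L.b, L.a, L.b, L.a] ++ [L.b] ++ rep [L.a, L.b] t ++ rep [L.b, L.a] t ++ [L.b]
      = rep [L.b, L.a] i ++ [L.b, L.a, L.b, L.a] ++ (([L.b] ++ rep [L.a, L.b] t) ++ (rep [L.b, L.a] t ++ [L.b])) := by
        simp [List.append_assoc]
    _ = rep [L.b, L.a] i ++ [L.b, L.a, L.b, L.a] ++ ((rep [L.b, L.a] t ++ [L.b]) ++ ([L.b] ++ rep [L.a, L.b] t)) := by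
        rw [hb]
    _ = rep [L.b, L.a] i ++ [L.b, L.a, L.b, L.a] ++ rep [L.b, L.a] t ++ [L.b, L.b] ++ rep [L.a, L.b] t := by
        simp [List.append_assoc]

/-- Case 2(a), `s = 1`: the word `(ba)^i · baba · b(ab)^t(ba)^t b` equals, as a word,
`(ba)^{i+t+2} · bb · (ab)^t`; it rewrites under `⇒*` to `(ba)^{i+2} bb`, and
`bb(ab)^{i+2}` is its reversal, reachable by `→*`. -/
theorem subrosa_case2a_s1 (i t : ℕ) :
    rep [L.b, L.a] i ++ [L.b, L.a, L.b, L.a] ++ [L.b] ++ rep [L.a, L.b] t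
        ++ rep [L.b, L.a] t ++ [L.b] =
      rep [L.b, L.a] (i + t + 2) ++ [L.b, L.b] ++ rep [L.a, L.b] t ∧
    FSteps (rep [L.b, L.a] i ++ [L.b, L.a, L.b, L.a] ++ [L.b] ++ rep [L.a, L.b] t
          ++ rep [L.b, L.a] t ++ [L.b])
        (rep [L.b, L.a] (i + 2) ++ [L.b, L.b]) ∧
    Steps (rep [L.b, L.a] (i + 2) ++ [L.b, L.b]) ([L.b, L.b] ++ rep [L.a, L.b] (i + 2)) ∧
    [L.b, L.b] ++ rep [L.a, L.b] (i + 2) = (rep [L.b, L.a] (i + 2) ++ [L.b, L.b]).reverse := by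
  refine ⟨part1 i t, ?_, part3 (i+2), by simp [rev_rep]⟩
  rw [part1 i t]
  have h := part2 (i+2) t
  have : i + t + 2 = i + 2 + t := by omega
  rw [this]
  exact h
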